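/- Let k ≥ 1, m ≥ 2, and let N₁, N₂ be natural numbers. Suppose: (i) every finite simple graph with at most N₁ vertices, all of whose odd cycles have length at least 2k+1, admits a proper coloring in m−1 colors; and (ii) every finite simple graph all of whose odd cycles have length at least 2k+1 that admits no proper coloring in m colors contains a vertex x whose metric ball B(x, k−1) has at least N₂ vertices. Then every finite simple graph with at most N₁ + N₂ vertices, all of whose odd cycles have length at least 2k+1, admits a proper coloring in m colors. -/

import Mathlib

/-!
Let `X` be a counterexample and `x` the vertex given by (ii), with `B = B(x, k-1)`. The graph
induced on the complement of `B` has at most `N₁` vertices, so it is `(m-1)`-colourable by (i).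
Inside `B` the parity of the distance to `x` is a proper 2-colouring: an edge joining two
vertices of equal parity closes an odd walk, hence an odd cycle, of length at most `2k-1`.
A vertex of `B` with a neighbour outside `B` is at distance exactly `k-1` from `x`, so giving
that parity class a new colour and the other class an old one extends the colouring of the
complement to an `m`-colouring of `X`.
-/

namespace SimpleGraph

variable {V W : Type*} {G : SimpleGraph V} {v x : V} {n r : ℕ}

namespace Walk

theorem exists_eq_append_of_not_isPath :
    ∀ {u v : V} (p : G.Walk u v), ¬p.IsPath →
      ∃ (y : V) (p₁ : G.Walk u y) (c : G.Walk y y) (p₂ : G.Walk y v),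
        ¬c.Nil ∧ p = p₁.append (c.append p₂)
  | _, _, .nil, hp => absurd IsPath.nil hp
  | u, _, .cons h q, hp => by
    classical
    by_cases hq : q.IsPath
    · have hu : u ∈ q.support := by simpa [cons_isPath_iff, hq] using hp
      exact ⟨u, .nil, .cons h (q.takeUntil u hu), q.dropUntil u hu, not_nil_cons,
        by simp [take_spec]⟩
    · obtain ⟨y, p₁, c, p₂, hc, rfl⟩ := exists_eq_append_of_not_isPath q hq
      exact ⟨y, .cons h p₁, c, p₂, hc, rfl⟩

theorem exists_isCycle_odd_length_le (w : G.Walk v v) (hw : Odd w.length) :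
    ∃ (u : V) (c : G.Walk u u), c.IsCycle ∧ Odd c.length ∧ c.length ≤ w.length := by
  induction hn : w.length using Nat.strong_induction_on generalizing v with
  | _ n ih =>
  subst hn
  cases w with
  | nil => simp at hw
  | @cons _ z _ h r =>
    by_cases hr : r.IsPath
    · refine ⟨v, .cons h r, isCycle_iff_isPath_tail_and_le_length.mpr ⟨?_, ?_⟩, hw, le_rfl⟩
      · simpa using hr
      · have : r.length ≠ 0 := fun h0 => G.ne_of_adj h (eq_of_length_eq_zero (p := r) h0).symm
        rw [length_cons] at hw ⊢
        grind
    · obtain ⟨y, p₁, c, p₂, hc, rfl⟩ := exists_eq_append_of_not_isPath r hr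
      let rest : G.Walk v v := .cons h (p₁.append p₂)
      have hlen : (cons h (p₁.append (c.append p₂))).length = rest.length + c.length := by
        simp only [rest, length_cons, length_append]
        omega
      have hc₀ : 0 < c.length := not_nil_iff_lt_length.mp hc
      have hrest₀ : 0 < rest.length := Nat.succ_pos _
      rw [hlen] at hw ih ⊢
      -- cutting out `c` leaves a closed walk `rest`; one of the two is odd
      by_cases hco : Odd c.length
      · obtain ⟨u, c', h₁, h₂, h₃⟩ := ih _ (by omega) c hco rfl
        exact ⟨u, c', h₁, h₂, by omega⟩
      · obtain ⟨u, c', h₁, h₂, h₃⟩ := ih _ (by omega) rest (by grind) rfl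
        exact ⟨u, c', h₁, h₂, by omega⟩

end Walk

def NoOddCycleShorterThan (G : SimpleGraph V) (n : ℕ) : Prop :=
  ∀ (v : V) (c : G.Walk v v), c.IsCycle → Odd c.length → n ≤ c.length

theorem NoOddCycleShorterThan.le_length (hG : G.NoOddCycleShorterThan n) (w : G.Walk v v)
    (hw : Odd w.length) : n ≤ w.length :=
  let ⟨u, c, hc, hco, hle⟩ := w.exists_isCycle_odd_length_le hw
  (hG u c hc hco).trans hle

theorem NoOddCycleShorterThan.of_embedding {G' : SimpleGraph W} (f : G ↪g G')
    (hG' : G'.NoOddCycleShorterThan n) : G.NoOddCycleShorterThan n := fun v c hc hco => by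
  simpa using hG' (f v) (c.map f.toHom)
    ((Walk.isCycle_map_iff_of_injective f.injective).mpr hc) (by simpa using hco)

def closedBall (G : SimpleGraph V) (x : V) (r : ℕ) : Set V :=
  {y | ∃ w : G.Walk x y, w.length ≤ r}

theorem mem_closedBall_iff {y : V} :
    y ∈ G.closedBall x r ↔ G.Reachable x y ∧ G.dist x y ≤ r := by
  refine ⟨fun ⟨w, hw⟩ => ⟨⟨w⟩, (dist_le w).trans hw⟩, fun ⟨hxy, hr⟩ => ?_⟩
  obtain ⟨w, hw⟩ := hxy.exists_walk_length_eq_dist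
  exact ⟨w, hw ▸ hr⟩

theorem odd_dist_add_dist_of_adj (hG : G.NoOddCycleShorterThan n) (hr : 2 * r + 1 < n)
    {a b : V} (hab : G.Adj a b) (ha : a ∈ G.closedBall x r) (hb : b ∈ G.closedBall x r) :
    Odd (G.dist x a + G.dist x b) := by
  obtain ⟨hxa, hda⟩ := mem_closedBall_iff.mp ha
  obtain ⟨hxb, hdb⟩ := mem_closedBall_iff.mp hb
  obtain ⟨p, hp⟩ := hxa.exists_walk_length_eq_dist
  obtain ⟨q, hq⟩ := hxb.exists_walk_length_eq_dist
  by_contra hev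
  have := hG.le_length (p.append (.cons hab q.reverse))
    (by simpa [hp, hq, ← add_assoc, Nat.odd_add_one] using hev)
  simp only [Walk.length_append, Walk.length_cons, Walk.length_reverse] at this
  omega

theorem dist_eq_of_adj_of_mem_closedBall_of_notMem {a b : V} (hab : G.Adj a b)
    (ha : a ∈ G.closedBall x r) (hb : b ∉ G.closedBall x r) : G.dist x a = r := by
  obtain ⟨hxa, hda⟩ := mem_closedBall_iff.mp ha
  obtain ⟨p, hp⟩ := hxa.exists_walk_length_eq_dist
  by_contra hne
  exact hb ⟨p.concat hab, by rw [Walk.length_concat]; omega⟩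

theorem colorable_succ_of_induce_compl {S T : Set V} (hn : 1 ≤ n)
    (hC : (G.induce Sᶜ).Colorable n)
    (hS : ∀ a b, G.Adj a b → a ∈ S → b ∈ S → (a ∈ T ↔ b ∉ T))
    (hbd : ∀ a b, G.Adj a b → a ∈ S → b ∉ S → a ∈ T) : G.Colorable (n + 1) := by
  classical
  obtain ⟨C, hCn⟩ := (colorable_iff_exists_bdd_nat_coloring n).mp hC
  let f : V → ℕ := fun v => if h : v ∈ S then (if v ∈ T then n else 0) else C ⟨v, h⟩
  have hf_mem (v : V) (h : v ∈ S) : f v = if v ∈ T then n else 0 := dif_pos h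
  have hf_notMem (v : V) (h : v ∉ S) : f v = C ⟨v, h⟩ := dif_neg h
  refine (colorable_iff_exists_bdd_nat_coloring (n + 1)).mpr ⟨Coloring.mk f ?_, fun v => ?_⟩
  · intro a b hab
    by_cases ha : a ∈ S <;> by_cases hb : b ∈ S
    · rw [hf_mem a ha, hf_mem b hb]
      have := hS a b hab ha hb
      split_ifs <;> grind
    · rw [hf_mem a ha, hf_notMem b hb, if_pos (hbd a b hab ha hb)]
      exact (hCn _).ne'
    · rw [hf_notMem a ha, hf_mem b hb, if_pos (hbd b a hab.symm hb ha)]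
      exact (hCn _).ne
    · rw [hf_notMem a ha, hf_notMem b hb]
      exact C.valid (by simpa using hab)
  · change f v < n + 1
    by_cases hv : v ∈ S
    · rw [hf_mem v hv]
      split_ifs <;> omega
    · rw [hf_notMem v hv]
      exact (hCn _).trans n.lt_succ_self

end SimpleGraph

open SimpleGraph

/-- **Lemma (rephrased Lemma 2 of Berlov–Bogdanov): `f(m,k) ≥ f(m-1,k) + d(m,k-1)`.**
If (i) every finite simple graph with at most `N₁` vertices and all odd cycles of length at
least `2k+1` is `(m-1)`-colorable, and (ii) every such graph that is not `m`-colorable has a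
metric ball of radius `k-1` with at least `N₂` vertices, then every finite simple graph with
at most `N₁ + N₂` vertices and all odd cycles of length at least `2k+1` is `m`-colorable. -/
theorem bb_lemma2 (k m N₁ N₂ : ℕ) (hk : 1 ≤ k) (hm : 2 ≤ m)
    (h1 : ∀ (V : Type) [Fintype V] (X : SimpleGraph V),
      Fintype.card V ≤ N₁ →
      (∀ (v : V) (w : X.Walk v v), w.IsCycle → Odd w.length → 2 * k + 1 ≤ w.length) →
      X.Colorable (m - 1))
    (h2 : ∀ (V : Type) [Fintype V] (X : SimpleGraph V),
      (∀ (v : V) (w : X.Walk v v), w.IsCycle → Odd w.length → 2 * k + 1 ≤ w.length) →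
      ¬ X.Colorable m →
      ∃ x : V, N₂ ≤ ({y : V | ∃ w : X.Walk x y, w.length ≤ k - 1} : Set V).ncard) :
    ∀ (V : Type) [Fintype V] (X : SimpleGraph V),
      Fintype.card V ≤ N₁ + N₂ →
      (∀ (v : V) (w : X.Walk v v), w.IsCycle → Odd w.length → 2 * k + 1 ≤ w.length) →
      X.Colorable m := by
  intro V _ X hcard hX
  by_contra hnc
  obtain ⟨x, hx⟩ : ∃ x, N₂ ≤ (X.closedBall x (k - 1)).ncard := h2 V X hX hnc
  set S := X.closedBall x (k - 1)
  have hSc : (X.induce Sᶜ).Colorable (m - 1) := by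
    have := Fintype.ofFinite ↥Sᶜ
    have hS_add_Sc := Set.ncard_add_ncard_compl S
    rw [Nat.card_eq_fintype_card] at hS_add_Sc
    refine h1 _ _ ?_ (NoOddCycleShorterThan.of_embedding (Embedding.induce Sᶜ) hX)
    rw [← Nat.card_eq_fintype_card, Nat.card_coe_set_eq]
    omega
  refine hnc (Nat.sub_add_cancel (by omega : 1 ≤ m) ▸ colorable_succ_of_induce_compl
    (T := {v | Even (X.dist x v + (k - 1))}) (by omega) hSc ?_ ?_)
  · intro a b hab ha hb
    have hodd := odd_dist_add_dist_of_adj hX (by omega) hab ha hb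
    rw [Nat.odd_add, ← Nat.not_even_iff_odd] at hodd
    simp only [Set.mem_ofPred_eq, Nat.even_add]
    tauto
  · intro a b hab ha hb
    simp [dist_eq_of_adj_of_mem_closedBall_of_notMem hab ha hb]
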